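/- Arm Lemma (non-crossing, weakly-above form). Let u_0, u_1, ..., u_m and v_0, v_1, ..., v_m be points of ℝ² (identified with ℂ) such that: (i) u_0 = v_0; (ii) |u_j − u_{j−1}| = |v_j − v_{j−1}| for j = 1, ..., m; (iii) for each j = 1, ..., m the differences u_j − u_{j−1} and v_j − v_{j−1} are nonzero and their arguments lie in the open interval (−π/10, π/10); (iv) arg(v_j − v_{j−1}) ≥ arg(u_j − u_{j−1}) for each j = 1, ..., m. Then the broken line through v_0, ..., v_m lies weakly above the broken line through u_0, ..., u_m: for all indices i, j ∈ {1, ..., m} and all points p ∈ [u_{i−1}, u_i] and q ∈ [v_{j−1}, v_j] whose first coordinates are equal, the second coordinate of q is greater than or equal to the second coordinate of p. In particular the two broken lines do not cross. -/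

import Mathlib

/-!
Put `t = tan (π / 10)`. Every step of `v` lies in the cone `S` of slope `t` around the positive
real axis, and every difference of corresponding steps lies in the cone `V` of slope `t` around
the positive imaginary axis: two vectors of equal length with arguments `α ≤ β` differ by a
nonnegative multiple of `I * exp ((α + β) / 2 * I)`. Summing, `v k - u k ∈ V`, so each point `p` of
the `u`-line has a point `r` of the `v`-line with `r - p ∈ V`, while any two points of the `v`-line
differ by an element of `S` or of `-S`. For `q` on the `v`-line with `q.re = p.re`, the real parts
of `q - r` and `r - p` cancel, so `|(q - r).im| ≤ t² (r - p).im ≤ (r - p).im`, i.e. `p.im ≤ q.im`.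
-/

open Complex Real Set

open ComplexConjugate

/-- With `t = tan θ`, the vectors making an angle at most `θ` with the direction `ζ`. -/
def sectorCone (t : ℝ) (ζ : ℂ) : PointedCone ℝ ℂ where
  carrier := {z | |(z * conj ζ).im| ≤ t * (z * conj ζ).re}
  add_mem' {z w} hz hw := by
    simp only [Set.mem_ofPred_eq, add_mul, add_im, add_re] at *
    linarith [abs_add_le (z * conj ζ).im (w * conj ζ).im]
  zero_mem' := by simp
  smul_mem' c z hz := by
    obtain ⟨c, hc⟩ := c
    simp only [Set.mem_ofPred_eq, Nonneg.mk_smul, real_smul, mul_assoc, re_ofReal_mul,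
      im_ofReal_mul, abs_mul, abs_of_nonneg hc] at *
    nlinarith

theorem mem_sectorCone {t : ℝ} {ζ z : ℂ} :
    z ∈ sectorCone t ζ ↔ |(z * conj ζ).im| ≤ t * (z * conj ζ).re := .rfl

@[simp]
theorem mem_sectorCone_one {t : ℝ} {z : ℂ} : z ∈ sectorCone t 1 ↔ |z.im| ≤ t * z.re := by
  simp [mem_sectorCone]

@[simp]
theorem mem_sectorCone_I {t : ℝ} {z : ℂ} : z ∈ sectorCone t I ↔ |z.re| ≤ t * z.im := by
  simp [mem_sectorCone]

theorem I_mul_mem_sectorCone_I {t : ℝ} {z : ℂ} :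
    I * z ∈ sectorCone t I ↔ z ∈ sectorCone t 1 := by
  simp

theorem exp_mul_I_mem_sectorCone_one {γ θ : ℝ} (hγ : |γ| ≤ θ) (hθ : θ < π / 2) :
    exp (γ * I) ∈ sectorCone (Real.tan θ) 1 := by
  have hπ : |γ| ≤ π := by linarith [pi_pos]
  have hγ₀ : 0 ≤ |γ| := abs_nonneg γ
  rw [mem_sectorCone_one, exp_ofReal_mul_I_re, exp_ofReal_mul_I_im,
    abs_sin_eq_sin_abs_of_abs_le_pi hπ, ← Real.cos_abs γ]
  have hcos : 0 < Real.cos |γ| := cos_pos_of_mem_Ioo ⟨by linarith [pi_pos], by linarith⟩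
  have htan : Real.tan |γ| ≤ Real.tan θ :=
    strictMonoOn_tan.monotoneOn ⟨by linarith [pi_pos], by linarith⟩ ⟨by linarith [pi_pos], hθ⟩ hγ
  calc Real.sin |γ| = Real.tan |γ| * Real.cos |γ| := by
        rw [Real.tan_eq_sin_div_cos, div_mul_cancel₀ _ hcos.ne']
    _ ≤ Real.tan θ * Real.cos |γ| := mul_le_mul_of_nonneg_right htan hcos.le

theorem mem_sectorCone_one_of_abs_arg_le {z : ℂ} {θ : ℝ} (hz : |arg z| ≤ θ) (hθ : θ < π / 2) :
    z ∈ sectorCone (Real.tan θ) 1 := by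
  rw [← norm_mul_exp_arg_mul_I z, ← real_smul]
  exact (sectorCone _ 1).smul_mem (norm_nonneg z) (exp_mul_I_mem_sectorCone_one hz hθ)

theorem exp_mul_I_sub_exp_mul_I (α β : ℝ) :
    exp (β * I) - exp (α * I) =
      (2 * Real.sin ((β - α) / 2)) • (I * exp (((β + α) / 2 : ℝ) * I)) := by
  apply Complex.ext
  · simp only [sub_re, real_smul, re_ofReal_mul, I_mul_re, exp_ofReal_mul_I_re,
      exp_ofReal_mul_I_im, Real.cos_sub_cos]
    ring
  · simp only [sub_im, real_smul, im_ofReal_mul, I_mul_im, exp_ofReal_mul_I_re,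
      exp_ofReal_mul_I_im, Real.sin_sub_sin]

theorem sub_mem_sectorCone_I_of_arg_le_arg {z w : ℂ} {θ : ℝ} (hnorm : ‖z‖ = ‖w‖)
    (hz : |arg z| ≤ θ) (hw : |arg w| ≤ θ) (hle : arg z ≤ arg w) (hθ : θ < π / 2) :
    w - z ∈ sectorCone (Real.tan θ) I := by
  obtain ⟨hz₁, hz₂⟩ := abs_le.1 hz
  obtain ⟨hw₁, hw₂⟩ := abs_le.1 hw
  have hsin : 0 ≤ Real.sin ((arg w - arg z) / 2) :=
    sin_nonneg_of_nonneg_of_le_pi (by linarith) (by linarith)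
  have hmid : |(arg w + arg z) / 2| ≤ θ := abs_le.2 ⟨by linarith, by linarith⟩
  rw [← norm_mul_exp_arg_mul_I z, ← norm_mul_exp_arg_mul_I w, hnorm, ← mul_sub,
    exp_mul_I_sub_exp_mul_I, ← real_smul, smul_smul]
  exact (sectorCone _ I).smul_mem (by positivity)
    (I_mul_mem_sectorCone_I.2 (exp_mul_I_mem_sectorCone_one hmid hθ))

namespace PointedCone

variable {E : Type*} [AddCommGroup E] [Module ℝ E] (C : PointedCone ℝ E)

theorem sub_mem_of_forall_succ_sub_mem {m : ℕ} {v : ℕ → E} (hv : ∀ k < m, v (k + 1) - v k ∈ C)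
    {i j : ℕ} (hij : i ≤ j) (hj : j ≤ m) : v j - v i ∈ C := by
  induction j, hij using Nat.le_induction with
  | base => simp
  | succ j hij ih =>
    rw [← sub_add_sub_cancel _ (v j)]
    exact C.add_mem (hv j (by omega)) (ih (by omega))

variable {C}

theorem sub_mem_of_mem_segment {a b x : E} (hab : b - a ∈ C) (hx : x ∈ segment ℝ a b) :
    x - a ∈ C ∧ b - x ∈ C := by
  rw [segment_eq_image'] at hx
  obtain ⟨s, ⟨hs₀, hs₁⟩, rfl⟩ := hx
  constructor
  · simpa using C.smul_mem hs₀ hab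
  · convert C.smul_mem (sub_nonneg.2 hs₁) hab using 1
    module

theorem sub_mem_or_sub_mem_of_mem_segment {a b x y : E} (hab : b - a ∈ C)
    (hx : x ∈ segment ℝ a b) (hy : y ∈ segment ℝ a b) : y - x ∈ C ∨ x - y ∈ C := by
  rw [segment_eq_image'] at hx hy
  obtain ⟨s, -, rfl⟩ := hx
  obtain ⟨s', -, rfl⟩ := hy
  rcases le_total s s' with h | h
  · left
    convert C.smul_mem (sub_nonneg.2 h) hab using 1
    module
  · right
    convert C.smul_mem (sub_nonneg.2 h) hab using 1
    module

theorem exists_mem_segment_sub_mem {a b a' b' x : E} (ha : a' - a ∈ C) (hb : b' - b ∈ C)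
    (hx : x ∈ segment ℝ a b) : ∃ y ∈ segment ℝ a' b', y - x ∈ C := by
  obtain ⟨μ, ν, hμ, hν, hμν, rfl⟩ := hx
  refine ⟨μ • a' + ν • b', ⟨μ, ν, hμ, hν, hμν, rfl⟩, ?_⟩
  convert C.add_mem (C.smul_mem hμ ha) (C.smul_mem hν hb) using 1
  module

theorem sub_mem_or_sub_mem_of_mem_segment_succ {m : ℕ} {v : ℕ → E}
    (hv : ∀ k < m, v (k + 1) - v k ∈ C) {i j : ℕ} (hi : i < m) (hj : j < m) {x y : E}
    (hx : x ∈ segment ℝ (v i) (v (i + 1))) (hy : y ∈ segment ℝ (v j) (v (j + 1))) :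
    y - x ∈ C ∨ x - y ∈ C := by
  wlog hij : i ≤ j generalizing i j x y
  · exact (this hj hi hy hx (by omega)).symm
  obtain rfl | hij := hij.eq_or_lt
  · exact sub_mem_or_sub_mem_of_mem_segment (hv i hi) hx hy
  left
  rw [← sub_add_sub_cancel y (v j) x, ← sub_add_sub_cancel (v j) (v (i + 1)) x]
  exact C.add_mem (sub_mem_of_mem_segment (hv j hj) hy).1 <| C.add_mem
    (C.sub_mem_of_forall_succ_sub_mem hv hij hj.le) (sub_mem_of_mem_segment (hv i hi) hx).2

end PointedCone

theorem im_le_im_of_re_eq {t : ℝ} (ht₀ : 0 < t) (ht₁ : t ≤ 1) {p q r : ℂ}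
    (hr : r - p ∈ sectorCone t I) (hq : q - r ∈ sectorCone t 1 ∨ r - q ∈ sectorCone t 1)
    (hre : p.re = q.re) : p.im ≤ q.im := by
  rw [mem_sectorCone_I] at hr
  have hqr : |(q - r).im| ≤ t * |(q - r).re| := by
    rcases hq with hq | hq
    · exact (mem_sectorCone_one.1 hq).trans (mul_le_mul_of_nonneg_left (le_abs_self _) ht₀.le)
    · rw [← neg_sub, mem_sectorCone_one, neg_im, neg_re, abs_neg] at hq
      exact hq.trans (mul_le_mul_of_nonneg_left (neg_le_abs _) ht₀.le)
  have hre' : |(q - r).re| = |(r - p).re| := by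
    rw [sub_re, sub_re, hre, abs_sub_comm]
  have hrp : 0 ≤ (r - p).im := nonneg_of_mul_nonneg_right ((abs_nonneg _).trans hr) ht₀
  have : |(q - r).im| ≤ (r - p).im := calc
    |(q - r).im| ≤ t * |(r - p).re| := hre' ▸ hqr
    _ ≤ t * (t * (r - p).im) := mul_le_mul_of_nonneg_left hr ht₀.le
    _ ≤ 1 * (1 * (r - p).im) := by gcongr
    _ = (r - p).im := by ring
  simp only [sub_im] at this
  linarith [neg_abs_le (q.im - r.im)]

theorem im_le_im_of_mem_segment {t : ℝ} (ht₀ : 0 < t) (ht₁ : t ≤ 1) {m : ℕ} {u v : ℕ → ℂ}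
    (h₀ : v 0 - u 0 ∈ sectorCone t I) (hv : ∀ k < m, v (k + 1) - v k ∈ sectorCone t 1)
    (hvu : ∀ k < m, (v (k + 1) - v k) - (u (k + 1) - u k) ∈ sectorCone t I)
    {i j : ℕ} (hi : i < m) (hj : j < m) {p q : ℂ} (hp : p ∈ segment ℝ (u i) (u (i + 1)))
    (hq : q ∈ segment ℝ (v j) (v (j + 1))) (hre : p.re = q.re) : p.im ≤ q.im := by
  have hvert : ∀ k ≤ m, v k - u k ∈ sectorCone t I := fun k hk => by
    have := (sectorCone t I).sub_mem_of_forall_succ_sub_mem (v := fun k => v k - u k)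
      (fun k hk => by simpa only [sub_sub_sub_comm] using hvu k hk) (Nat.zero_le k) hk
    simpa using add_mem h₀ this
  obtain ⟨r, hr, hrp⟩ :=
    PointedCone.exists_mem_segment_sub_mem (hvert i hi.le) (hvert (i + 1) hi) hp
  exact im_le_im_of_re_eq ht₀ ht₁ hrp
    (PointedCone.sub_mem_or_sub_mem_of_mem_segment_succ hv hi hj hr hq) hre

theorem arm_lemma_weakly_above_general (m : ℕ) (u v : ℕ → ℂ)
    (h0 : u 0 = v 0)
    (hlen : ∀ j, 1 ≤ j → j ≤ m → ‖u j - u (j - 1)‖ = ‖v j - v (j - 1)‖)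
    (huarg : ∀ j, 1 ≤ j → j ≤ m →
      Complex.arg (u j - u (j - 1)) ∈ Set.Ioo (-(π / 10)) (π / 10))
    (hvarg : ∀ j, 1 ≤ j → j ≤ m →
      Complex.arg (v j - v (j - 1)) ∈ Set.Ioo (-(π / 10)) (π / 10))
    (hmono : ∀ j, 1 ≤ j → j ≤ m →
      Complex.arg (u j - u (j - 1)) ≤ Complex.arg (v j - v (j - 1))) :
    ∀ i, 1 ≤ i → i ≤ m → ∀ j, 1 ≤ j → j ≤ m →
      ∀ p ∈ segment ℝ (u (i - 1)) (u i), ∀ q ∈ segment ℝ (v (j - 1)) (v j),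
        p.re = q.re → p.im ≤ q.im := by
  have hθ : π / 10 < π / 2 := by linarith [pi_pos]
  have ht₀ : 0 < Real.tan (π / 10) := tan_pos_of_pos_of_lt_pi_div_two (by positivity) hθ
  have ht₁ : Real.tan (π / 10) ≤ 1 := tan_pi_div_four ▸
    (tan_lt_tan_of_nonneg_of_lt_pi_div_two (by positivity) (by linarith [pi_pos])
      (by linarith [pi_pos])).le
  have habs {z : ℂ} (hz : arg z ∈ Ioo (-(π / 10)) (π / 10)) : |arg z| ≤ π / 10 :=
    abs_le.2 ⟨hz.1.le, hz.2.le⟩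
  rintro _ hi₁ hi _ hj₁ hj p hp q hq hre
  obtain ⟨i, rfl⟩ := Nat.exists_eq_add_of_le' hi₁
  obtain ⟨j, rfl⟩ := Nat.exists_eq_add_of_le' hj₁
  refine im_le_im_of_mem_segment (u := u) (v := v) ht₀ ht₁ (by simp [h0]) (fun k hk => ?_)
    (fun k hk => ?_) hi hj (by simpa using hp) (by simpa using hq) hre
  · simpa using mem_sectorCone_one_of_abs_arg_le (habs (hvarg (k + 1) (by omega) hk)) hθ
  · simpa using sub_mem_sectorCone_I_of_arg_le_arg (hlen (k + 1) (by omega) hk)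
      (habs (huarg (k + 1) (by omega) hk)) (habs (hvarg (k + 1) (by omega) hk))
      (hmono (k + 1) (by omega) hk) hθ

/-- **Arm Lemma (non-crossing, weakly-above form).** -/
theorem arm_lemma_weakly_above (m : ℕ) (u v : ℕ → ℂ)
    (h0 : u 0 = v 0)
    (hlen : ∀ j, 1 ≤ j → j ≤ m → ‖u j - u (j - 1)‖ = ‖v j - v (j - 1)‖)
    (hune : ∀ j, 1 ≤ j → j ≤ m → u j - u (j - 1) ≠ 0)
    (hvne : ∀ j, 1 ≤ j → j ≤ m → v j - v (j - 1) ≠ 0)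
    (huarg : ∀ j, 1 ≤ j → j ≤ m →
      Complex.arg (u j - u (j - 1)) ∈ Set.Ioo (-(π / 10)) (π / 10))
    (hvarg : ∀ j, 1 ≤ j → j ≤ m →
      Complex.arg (v j - v (j - 1)) ∈ Set.Ioo (-(π / 10)) (π / 10))
    (hmono : ∀ j, 1 ≤ j → j ≤ m →
      Complex.arg (u j - u (j - 1)) ≤ Complex.arg (v j - v (j - 1))) :
    ∀ i, 1 ≤ i → i ≤ m → ∀ j, 1 ≤ j → j ≤ m →
      ∀ p ∈ segment ℝ (u (i - 1)) (u i), ∀ q ∈ segment ℝ (v (j - 1)) (v j),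
        p.re = q.re → p.im ≤ q.im :=
  arm_lemma_weakly_above_general m u v h0 hlen huarg hvarg hmono
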